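/- arXiv:1709.03053 — 5 statements merged into one kernel-verified Lean document; each statement's English description precedes it below -/
import Mathlib

section
/- Let F be a finite alphabet and D a finite set of probability distributions (dice) on F. Suppose for every die d ∈ D there exists ψ_d : F → ℝ with E_{d'}[ψ_d] = 0 for all d' ∈ D and ψ_d not constant on the support of d. Then there exists a single ψ : F → ℝ with E_{d'}[ψ] = 0 for all d' ∈ D and ψ not constant on the support of any d ∈ D (equivalently, Var_d[ψ] > 0 for all d ∈ D). -/
noncomputable def gExp {F : Type*} [Fintype F] (d ψ : F → ℝ) : ℝ := ∑ f, d f * ψ f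

theorem nk_plus_equiv {F : Type*} [Fintype F] (D : Finset (F → ℝ))
    (hD : ∀ d ∈ D, (∀ f, 0 ≤ d f) ∧ ∑ f, d f = 1)
    (h : ∀ d ∈ D, ∃ ψd : F → ℝ, (∀ d' ∈ D, gExp d' ψd = 0) ∧
      ∃ f g, 0 < d f ∧ 0 < d g ∧ ψd f ≠ ψd g) :
    ∃ ψ : F → ℝ, (∀ d' ∈ D, gExp d' ψ = 0) ∧
      ∀ d ∈ D, ∃ f g, 0 < d f ∧ 0 < d g ∧ ψ f ≠ ψ g := by
  classical
  suffices H : ∀ S : Finset (F → ℝ), S ⊆ D → ∃ ψ : F → ℝ,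
      (∀ d' ∈ D, gExp d' ψ = 0) ∧ ∀ d ∈ S, ∃ f g, 0 < d f ∧ 0 < d g ∧ ψ f ≠ ψ g by
    exact H D le_rfl
  intro S
  induction S using Finset.induction_on with
  | empty =>
    intro _
    exact ⟨0, fun d' _ => by simp [gExp], fun d hd => absurd hd (by simp)⟩
  | @insert a S ha ih =>
    intro hsub
    have haD : a ∈ D := hsub (Finset.mem_insert_self a S)
    obtain ⟨ψ, hψ0, hψnc⟩ := ih (fun x hx => hsub (Finset.mem_insert_of_mem hx))
    obtain ⟨ψa, hψa0, f0, g0, hf0, hg0, hne0⟩ := h a haD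
    have hwit : ∀ d ∈ insert a S, ∃ x y, 0 < d x ∧ 0 < d y ∧ (ψ x ≠ ψ y ∨ ψa x ≠ ψa y) := by
      intro d hd
      rcases Finset.mem_insert.mp hd with rfl | hd
      · exact ⟨f0, g0, hf0, hg0, Or.inr hne0⟩
      · obtain ⟨x, y, hx, hy, hxy⟩ := hψnc d hd
        exact ⟨x, y, hx, hy, Or.inl hxy⟩
    set Bad : (F → ℝ) → Set ℝ :=
      fun d => {t | ∀ x y, 0 < d x → 0 < d y → ψ x + t * ψa x = ψ y + t * ψa y} with hBadDef
    have hBadsub : ∀ d ∈ insert a S, (Bad d).Subsingleton := by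
      intro d hd t1 ht1 t2 ht2
      obtain ⟨x, y, hx, hy, hxy⟩ := hwit d hd
      have e1 := ht1 x y hx hy
      have e2 := ht2 x y hx hy
      by_cases hca : ψa x = ψa y
      · have hpx : ψ x = ψ y := by rw [hca] at e1; linarith
        rcases hxy with h1 | h1
        · exact absurd hpx h1
        · exact absurd hca h1
      · have hz : (t1 - t2) * (ψa x - ψa y) = 0 := by nlinarith [e1, e2]
        rcases mul_eq_zero.mp hz with h1 | h1
        · linarith
        · exact absurd (by linarith : ψa x = ψa y) hca
    have hfin : (⋃ d ∈ (insert a S : Finset (F → ℝ)), Bad d).Finite :=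
      Set.Finite.biUnion (insert a S).finite_toSet (fun d hd => (hBadsub d hd).finite)
    obtain ⟨t, ht⟩ := hfin.infinite_compl.nonempty
    refine ⟨fun f => ψ f + t * ψa f, ?_, ?_⟩
    · intro d' hd'
      have hlin : gExp d' (fun f => ψ f + t * ψa f) = gExp d' ψ + t * gExp d' ψa := by
        simp only [gExp, Finset.mul_sum, ← Finset.sum_add_distrib]
        exact Finset.sum_congr rfl (fun x _ => by ring)
      rw [hlin, hψ0 d' hd', hψa0 d' hd']
      ring
    · intro d hd
      have htd : t ∉ Bad d := fun hmem => ht (Set.mem_biUnion hd hmem)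
      rw [hBadDef] at htd
      simp only [Set.mem_setOf_eq] at htd
      push_neg at htd
      obtain ⟨x, y, hx, hy, hne⟩ := htd
      exact ⟨x, y, hx, hy, hne⟩
end

section
/- Let F be a finite set and D a finite set of distributions on F failing NK⁺, i.e., every ψ ∈ Ker D is constant on the support of some fixed die d. Then there is a constant C (depending only on (F,D)) such that for every ε > 0 there is no ψ : F → [-1,1] satisfying |E_{d'}[ψ]| < ε·(Var_{d'}[ψ] - C·ε²) for all d' ∈ D. -/
noncomputable def gVar {F : Type*} [Fintype F] (d ψ : F → ℝ) : ℝ :=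
  ∑ f, d f * (ψ f - gExp d ψ)^2

noncomputable def gExpL {F : Type*} [Fintype F] (d : F → ℝ) : (F → ℝ) →ₗ[ℝ] ℝ where
  toFun ψ := gExp d ψ
  map_add' x y := by simp [gExp, mul_add, Finset.sum_add_distrib]
  map_smul' c x := by simp [gExp, Finset.mul_sum]; ring_nf; simp [mul_comm, mul_assoc, mul_left_comm]

lemma pair_bound {F : Type*} [Fintype F] (D : Finset (F → ℝ))
    (d : F → ℝ)
    (hker : ∀ ψ : F → ℝ, (∀ d' ∈ D, gExp d' ψ = 0) →
      ∀ f g, 0 < d f → 0 < d g → ψ f = ψ g)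
    (f g : F) (hf : 0 < d f) (hg : 0 < d g) :
    ∃ B : ℝ, 0 ≤ B ∧ ∀ ψ : F → ℝ, ∀ t : ℝ,
      (∀ d' ∈ D, |gExp d' ψ| ≤ t) → |ψ f - ψ g| ≤ B * t := by
  classical
  set K : (F → ℝ) →ₗ[ℝ] ℝ := (LinearMap.proj f : (F → ℝ) →ₗ[ℝ] ℝ) - LinearMap.proj g with hK
  have hsub : ⨅ i : (D : Finset (F → ℝ)), LinearMap.ker (gExpL (i : F → ℝ)) ≤ LinearMap.ker K := by
    intro ψ hψ
    simp only [Submodule.mem_iInf, LinearMap.mem_ker] at hψ ⊢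
    have : ∀ d' ∈ D, gExp d' ψ = 0 := fun d' hd' => hψ ⟨d', hd'⟩
    have := hker ψ this f g hf hg
    simp [hK, this]
  have hmem := mem_span_of_iInf_ker_le_ker hsub
  obtain ⟨c, hc⟩ := (Submodule.mem_span_range_iff_exists_fun ℝ).1 hmem
  refine ⟨∑ i : (D : Finset (F → ℝ)), |c i|, Finset.sum_nonneg fun _ _ => abs_nonneg _, ?_⟩
  intro ψ t hψ
  have hKψ : ψ f - ψ g = ∑ i : (D : Finset (F → ℝ)), c i * gExp (i : F → ℝ) ψ := by
    have := congrArg (fun L : (F → ℝ) →ₗ[ℝ] ℝ => L ψ) hc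
    have h2 := this.symm
    simp [hK, gExpL] at h2
    exact h2
  rw [hKψ, Finset.sum_mul]
  refine (Finset.abs_sum_le_sum_abs _ _).trans (Finset.sum_le_sum fun i _ => ?_)
  rw [abs_mul]
  exact mul_le_mul_of_nonneg_left (hψ i i.2) (abs_nonneg _)

theorem mvd_fails_of_not_nk_plus {F : Type*} [Fintype F] (D : Finset (F → ℝ))
    (hD : ∀ d ∈ D, (∀ f, 0 ≤ d f) ∧ ∑ f, d f = 1)
    (d : F → ℝ) (hd : d ∈ D)
    (hker : ∀ ψ : F → ℝ, (∀ d' ∈ D, gExp d' ψ = 0) →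
      ∀ f g, 0 < d f → 0 < d g → ψ f = ψ g) :
    ∃ C : ℝ, ∀ ε : ℝ, 0 < ε →
      ¬ ∃ ψ : F → ℝ, (∀ f, ψ f ∈ Set.Icc (-1 : ℝ) 1) ∧
        ∀ d' ∈ D, |gExp d' ψ| < ε * (gVar d' ψ - C * ε^2) := by
  classical
  -- choose per-pair bounds
  have hpair : ∀ p : F × F, ∃ B : ℝ, 0 ≤ B ∧
      ((0 < d p.1 ∧ 0 < d p.2) → ∀ ψ : F → ℝ, ∀ t : ℝ,
        (∀ d' ∈ D, |gExp d' ψ| ≤ t) → |ψ p.1 - ψ p.2| ≤ B * t) := by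
    intro p
    by_cases h : 0 < d p.1 ∧ 0 < d p.2
    · obtain ⟨B, hB0, hB⟩ := pair_bound D d hker p.1 p.2 h.1 h.2
      exact ⟨B, hB0, fun _ => hB⟩
    · exact ⟨0, le_rfl, fun h' => absurd h' h⟩
  choose B hB0 hB using hpair
  set A : ℝ := ∑ p : F × F, B p with hA
  have hA0 : 0 ≤ A := Finset.sum_nonneg fun p _ => hB0 p
  have hAp : ∀ p : F × F, B p ≤ A := fun p =>
    Finset.single_le_sum (fun q _ => hB0 q) (Finset.mem_univ p)
  refine ⟨16 * A ^ 2, ?_⟩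
  intro ε hε ⟨ψ, hψ1, hψ2⟩
  have hC0 : (0:ℝ) ≤ 16 * A ^ 2 := by positivity
  -- each |gExp d' ψ| ≤ 4ε
  have hM : ∀ d' ∈ D, |gExp d' ψ| ≤ 4 * ε := by
    intro d' hd'
    obtain ⟨hpos, hsum⟩ := hD d' hd'
    have hμ : |gExp d' ψ| ≤ 1 := by
      calc |gExp d' ψ| ≤ ∑ x, |d' x * ψ x| := Finset.abs_sum_le_sum_abs _ _
        _ ≤ ∑ x, d' x := Finset.sum_le_sum fun x _ => by
            rw [abs_mul, abs_of_nonneg (hpos x)]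
            have := (hψ1 x)
            have h1 : |ψ x| ≤ 1 := abs_le.2 ⟨this.1, this.2⟩
            calc d' x * |ψ x| ≤ d' x * 1 := mul_le_mul_of_nonneg_left h1 (hpos x)
              _ = d' x := mul_one _
        _ = 1 := hsum
    have hvar : gVar d' ψ ≤ 4 := by
      have : ∀ x, d' x * (ψ x - gExp d' ψ)^2 ≤ d' x * 4 := by
        intro x
        refine mul_le_mul_of_nonneg_left ?_ (hpos x)
        have h1 : |ψ x - gExp d' ψ| ≤ 2 := by
          have := (hψ1 x)
          have := abs_le.1 hμ
          rw [abs_le]; constructor <;> nlinarith [(hψ1 x).1, (hψ1 x).2]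
        calc (ψ x - gExp d' ψ)^2 = |ψ x - gExp d' ψ|^2 := (sq_abs _).symm
          _ ≤ 2^2 := by nlinarith [abs_nonneg (ψ x - gExp d' ψ)]
          _ = 4 := by norm_num
      calc gVar d' ψ ≤ ∑ x, d' x * 4 := Finset.sum_le_sum fun x _ => this x
        _ = 4 := by rw [← Finset.sum_mul, hsum, one_mul]
    have := hψ2 d' hd'
    have : |gExp d' ψ| < ε * gVar d' ψ := by
      calc |gExp d' ψ| < ε * (gVar d' ψ - 16 * A ^ 2 * ε ^ 2) := this
        _ ≤ ε * gVar d' ψ := by nlinarith [mul_nonneg hε.le (mul_nonneg hC0 (sq_nonneg ε))]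
    calc |gExp d' ψ| ≤ ε * gVar d' ψ := this.le
      _ ≤ ε * 4 := mul_le_mul_of_nonneg_left hvar hε.le
      _ = 4 * ε := by ring
  -- deviation bound at d
  have hdev : ∀ x, 0 < d x → |ψ x - gExp d ψ| ≤ 4 * A * ε := by
    intro x hx
    obtain ⟨hpos, hsum⟩ := hD d hd
    have key : ψ x - gExp d ψ = ∑ y, d y * (ψ x - ψ y) := by
      simp only [mul_sub]
      rw [Finset.sum_sub_distrib, ← Finset.sum_mul, hsum, one_mul, gExp]
    rw [key]
    calc |∑ y, d y * (ψ x - ψ y)| ≤ ∑ y, |d y * (ψ x - ψ y)| :=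
          Finset.abs_sum_le_sum_abs _ _
      _ ≤ ∑ y, d y * (4 * A * ε) := by
          refine Finset.sum_le_sum fun y _ => ?_
          rw [abs_mul, abs_of_nonneg (hpos y)]
          rcases eq_or_lt_of_le (hpos y) with h0 | hy
          · simp [← h0]
          · refine mul_le_mul_of_nonneg_left ?_ (hpos y)
            have := hB (x, y) ⟨hx, hy⟩ ψ (4 * ε) hM
            calc |ψ x - ψ y| ≤ B (x, y) * (4 * ε) := this
              _ ≤ A * (4 * ε) := by
                  refine mul_le_mul_of_nonneg_right (hAp (x, y)) (by positivity)
              _ = 4 * A * ε := by ring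
      _ = 4 * A * ε := by rw [← Finset.sum_mul, hsum, one_mul]
  -- variance bound at d
  have hvard : gVar d ψ ≤ 16 * A ^ 2 * ε ^ 2 := by
    obtain ⟨hpos, hsum⟩ := hD d hd
    have : ∀ x, d x * (ψ x - gExp d ψ)^2 ≤ d x * (16 * A ^ 2 * ε ^ 2) := by
      intro x
      rcases eq_or_lt_of_le (hpos x) with h0 | hx
      · simp [← h0]
      · refine mul_le_mul_of_nonneg_left ?_ (hpos x)
        have h := hdev x hx
        have h0 := abs_nonneg (ψ x - gExp d ψ)
        calc (ψ x - gExp d ψ)^2 = |ψ x - gExp d ψ|^2 := (sq_abs _).symm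
          _ ≤ (4 * A * ε)^2 := by nlinarith
          _ = 16 * A ^ 2 * ε ^ 2 := by ring
    calc gVar d ψ ≤ ∑ x, d x * (16 * A ^ 2 * ε ^ 2) := Finset.sum_le_sum fun x _ => this x
      _ = 16 * A ^ 2 * ε ^ 2 := by rw [← Finset.sum_mul, hsum, one_mul]
  have := hψ2 d hd
  have : |gExp d ψ| < 0 := by nlinarith
  exact absurd this (not_lt.2 (abs_nonneg _))
end

section
/- Let (ψ_k)_{k ∈ ℕ} be functions F → [-1,1] on a finite set F, each attaining the value 1, and let (ε_k) be a sequence of positive reals decreasing to 0 such that |E_d[ψ_k]| < ε_k · Var_d[ψ_k] for all d in a finite set D of distributions on F. Then there exists a nonzero ψ : F → [-1,1] with E_d[ψ] = 0 for every d ∈ D. -/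
lemma gExp_abs_le {F : Type*} [Fintype F] (d χ : F → ℝ) (hd : ∀ f, 0 ≤ d f)
    (hsum : ∑ f, d f = 1) (hχ : ∀ f, |χ f| ≤ 1) : |gExp d χ| ≤ 1 := by
  calc |gExp d χ| ≤ ∑ f, |d f * χ f| := Finset.abs_sum_le_sum_abs _ _
    _ = ∑ f, d f * |χ f| := by
        refine Finset.sum_congr rfl fun f _ => ?_
        rw [abs_mul, abs_of_nonneg (hd f)]
    _ ≤ ∑ f, d f * 1 := Finset.sum_le_sum fun f _ =>
        mul_le_mul_of_nonneg_left (hχ f) (hd f)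
    _ = 1 := by simpa using hsum

lemma gVar_le_four {F : Type*} [Fintype F] (d χ : F → ℝ) (hd : ∀ f, 0 ≤ d f)
    (hsum : ∑ f, d f = 1) (hχ : ∀ f, |χ f| ≤ 1) : gVar d χ ≤ 4 := by
  have hE := gExp_abs_le d χ hd hsum hχ
  have hterm : ∀ f, (χ f - gExp d χ)^2 ≤ 4 := by
    intro f
    have h2 : |χ f - gExp d χ| ≤ 2 := by
      calc |χ f - gExp d χ| ≤ |χ f| + |gExp d χ| := abs_sub _ _
        _ ≤ 1 + 1 := add_le_add (hχ f) hE
        _ = 2 := by norm_num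
    calc (χ f - gExp d χ)^2 = |χ f - gExp d χ|^2 := (sq_abs _).symm
      _ ≤ 2^2 := pow_le_pow_left₀ (abs_nonneg _) h2 2
      _ = 4 := by norm_num
  calc gVar d χ ≤ ∑ f, d f * 4 := Finset.sum_le_sum fun f _ =>
        mul_le_mul_of_nonneg_left (hterm f) (hd f)
    _ = 4 := by rw [← Finset.sum_mul, hsum, one_mul]

theorem limit_witness {F : Type*} [Fintype F] (D : Finset (F → ℝ))
    (hD : ∀ d ∈ D, (∀ f, 0 ≤ d f) ∧ ∑ f, d f = 1)
    (ψ : ℕ → F → ℝ) (ε : ℕ → ℝ)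
    (hψbd : ∀ k f, ψ k f ∈ Set.Icc (-1 : ℝ) 1)
    (hψone : ∀ k, ∃ f, ψ k f = 1)
    (hεpos : ∀ k, 0 < ε k) (hεanti : Antitone ε)
    (hεlim : Filter.Tendsto ε Filter.atTop (nhds 0))
    (hmvr : ∀ k, ∀ d ∈ D, |gExp d (ψ k)| < ε k * gVar d (ψ k)) :
    ∃ ψ' : F → ℝ, ψ' ≠ 0 ∧ (∀ f, ψ' f ∈ Set.Icc (-1 : ℝ) 1) ∧
      ∀ d ∈ D, gExp d ψ' = 0 := by
  classical
  -- pigeonhole: a face f₀ hit by infinitely many k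
  set g : ℕ → F := fun k => (hψone k).choose with hgdef
  have hg : ∀ k, ψ k (g k) = 1 := fun k => (hψone k).choose_spec
  haveI : Finite F := Finite.of_fintype F
  obtain ⟨f₀, hf₀⟩ := Finite.exists_infinite_fiber g
  set S : Set ℕ := g ⁻¹' {f₀} with hSdef
  haveI : Infinite S := hf₀
  let e := Nat.Subtype.orderIsoOfNat S
  let t : ℕ → ℕ := fun n => (e n : ℕ)
  have htmono : StrictMono t := fun a b h => e.strictMono h
  have htS : ∀ n, g (t n) = f₀ := fun n => (e n).2
  -- compactness: convergent subsequence
  have hK : IsCompact (Set.pi Set.univ fun _ : F => Set.Icc (-1 : ℝ) 1) :=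
    isCompact_univ_pi fun _ => isCompact_Icc
  have hmem : ∀ n, ψ (t n) ∈ Set.pi Set.univ fun _ : F => Set.Icc (-1 : ℝ) 1 :=
    fun n => fun f _ => hψbd (t n) f
  obtain ⟨a, haK, φ, hφmono, hφlim⟩ := hK.tendsto_subseq hmem
  have habd : ∀ f, a f ∈ Set.Icc (-1 : ℝ) 1 := fun f => haK f (Set.mem_univ f)
  -- evaluation at f₀ converges to a f₀, but equals 1 everywhere
  have ha1 : a f₀ = 1 := by
    have h1 : Filter.Tendsto (fun n => ψ (t (φ n)) f₀) Filter.atTop (nhds (a f₀)) :=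
      (continuous_apply f₀).continuousAt.tendsto.comp hφlim
    have h2 : (fun n => ψ (t (φ n)) f₀) = fun _ => (1 : ℝ) := by
      funext n
      have := htS (φ n)
      calc ψ (t (φ n)) f₀ = ψ (t (φ n)) (g (t (φ n))) := by rw [this]
        _ = 1 := hg _
    rw [h2] at h1
    exact tendsto_nhds_unique h1 tendsto_const_nhds
  refine ⟨a, ?_, habd, ?_⟩
  · intro h
    rw [h] at ha1
    simpa using ha1
  · intro d hd
    obtain ⟨hdpos, hdsum⟩ := hD d hd
    -- gExp is continuous in ψ
    have hcont : Continuous fun p : F → ℝ => gExp d p := by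
      unfold gExp
      exact continuous_finset_sum _ fun f _ => (continuous_const).mul (continuous_apply f)
    have hlim1 : Filter.Tendsto (fun n => gExp d (ψ (t (φ n)))) Filter.atTop
        (nhds (gExp d a)) := hcont.continuousAt.tendsto.comp hφlim
    -- squeeze to zero
    have hbd : ∀ n, |gExp d (ψ (t (φ n)))| ≤ 4 * ε (t (φ n)) := by
      intro n
      have h1 := hmvr (t (φ n)) d hd
      have h2 : gVar d (ψ (t (φ n))) ≤ 4 := by
        refine gVar_le_four d _ hdpos hdsum fun f => ?_
        have := hψbd (t (φ n)) f
        exact abs_le.mpr ⟨this.1, this.2⟩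
      calc |gExp d (ψ (t (φ n)))| ≤ ε (t (φ n)) * gVar d (ψ (t (φ n))) := h1.le
        _ ≤ ε (t (φ n)) * 4 := mul_le_mul_of_nonneg_left h2 (hεpos _).le
        _ = 4 * ε (t (φ n)) := mul_comm _ _
    have hεlim' : Filter.Tendsto (fun n => 4 * ε (t (φ n))) Filter.atTop (nhds 0) := by
      have h0 : Filter.Tendsto (fun n => ε (t (φ n))) Filter.atTop (nhds 0) :=
        hεlim.comp ((htmono.comp hφmono).tendsto_atTop)
      simpa using h0.const_mul 4
    have hlim2 : Filter.Tendsto (fun n => gExp d (ψ (t (φ n)))) Filter.atTop (nhds 0) :=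
      squeeze_zero_norm (by simpa [Real.norm_eq_abs] using hbd) hεlim'
    exact tendsto_nhds_unique hlim1 hlim2
end

section
/- The three-faced, two-dice GSV source with dice d₁ = (0,0,1) and d₂ = (1/2, 1/2, 0) satisfies the NK condition: there exists a nonzero ψ : {1,2,3} → [-1,1] with E_{d₁}[ψ] = E_{d₂}[ψ] = 0 (namely ψ = (-1,1,0)), but fails NK⁺: there is no ψ : {1,2,3} → [-1,1] with E_d[ψ] = 0 and Var_d[ψ] > 0 for both dice. -/
theorem example_nk_not_nkplus :
    (∃ ψ : Fin 3 → ℝ, ψ ≠ 0 ∧ (∀ f, ψ f ∈ Set.Icc (-1 : ℝ) 1) ∧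
      gExp ![(0 : ℝ), 0, 1] ψ = 0 ∧ gExp ![(1/2 : ℝ), 1/2, 0] ψ = 0) ∧
    ¬ ∃ ψ : Fin 3 → ℝ, (∀ f, ψ f ∈ Set.Icc (-1 : ℝ) 1) ∧
      gExp ![(0 : ℝ), 0, 1] ψ = 0 ∧ gExp ![(1/2 : ℝ), 1/2, 0] ψ = 0 ∧
      0 < gVar ![(0 : ℝ), 0, 1] ψ ∧ 0 < gVar ![(1/2 : ℝ), 1/2, 0] ψ := by
  constructor
  · refine ⟨![(-1 : ℝ), 1, 0], ?_, ?_, ?_, ?_⟩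
    · intro h
      have := congrFun h 0
      simp at this
    · intro f
      fin_cases f <;> norm_num
    · simp [gExp, Fin.sum_univ_three]
    · simp [gExp, Fin.sum_univ_three]
  · rintro ⟨ψ, -, h1, -, hv, -⟩
    have he : ψ 2 = 0 := by
      simpa [gExp, Fin.sum_univ_three] using h1
    have : gVar ![(0 : ℝ), 0, 1] ψ = 0 := by
      simp [gVar, gExp, Fin.sum_univ_three, he]
    linarith
end

section
/- Let M = 2^m and let z ∈ ℝ^M be a vector with positive entries summing to 1, sorted via a permutation s so that z[s(1)] ≤ ... ≤ z[s(M)]. Define d ∈ ℝ^M by d[s(j)] = (-1)^j · z[s(j)] for 1 ≤ j ≤ M-1 and d[s(M)] = -Σ_{j=1}^{M-1} d[s(j)]. Then Σ_j d[j] = 0 and |d[j]| ≤ z[j] for every j ∈ [M]. -/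
lemma alt_bound (f : ℕ → ℝ) (mono : ∀ a b : ℕ, a ≤ b → f a ≤ f b) :
    ∀ k : ℕ, f 0 ≤ (∑ j ∈ Finset.range (2*k+1), (-1:ℝ)^j * f j) ∧
      (∑ j ∈ Finset.range (2*k+1), (-1:ℝ)^j * f j) ≤ f (2*k) := by
  intro k
  induction k with
  | zero => simp
  | succ k ih =>
    have h1 : 2*(k+1)+1 = (2*k+1) + 1 + 1 := by ring
    rw [h1, Finset.sum_range_succ, Finset.sum_range_succ]
    have e1 : (-1:ℝ)^(2*k+1) = -1 := by
      simp [pow_succ, pow_mul]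
    have e2 : (-1:ℝ)^(2*k+1+1) = 1 := by
      simp [pow_succ, pow_mul]
    rw [e1, e2]
    have hmono1 := mono (2*k+1) (2*k+1+1) (by omega)
    have hmono2 := mono (2*k) (2*k+1) (by omega)
    have h2 : 2*(k+1) = 2*k+1+1 := by ring
    constructor
    · nlinarith [ih.1]
    · rw [h2]; nlinarith [ih.2]

theorem update_direction_bounds (m M : ℕ) (hM : M = 2^m)
    (z d : Fin M → ℝ)
    (hpos : ∀ j, 0 < z j) (hsum : ∑ j, z j = 1)
    (s : Equiv.Perm (Fin M))
    (hsort : ∀ i j : Fin M, i ≤ j → z (s i) ≤ z (s j))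
    (hd : ∀ j : Fin M, (j : ℕ) < M - 1 → d (s j) = (-1 : ℝ)^((j : ℕ) + 1) * z (s j))
    (hdlast : ∀ j : Fin M, (j : ℕ) = M - 1 →
      d (s j) = -∑ i ∈ Finset.univ.filter (fun i : Fin M => (i : ℕ) < M - 1), d (s i)) :
    ∑ j, d j = 0 ∧ ∀ j, |d j| ≤ z j := by
  have hMpos : 0 < M := by rw [hM]; positivity
  set last : Fin M := ⟨M - 1, by omega⟩ with hlast
  have hfilter : Finset.univ.filter (fun i : Fin M => ¬ ((i : ℕ) < M - 1)) = {last} := by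
    ext i
    simp [Fin.ext_iff, hlast]
    omega
  have hsplit := Finset.sum_filter_add_sum_filter_not Finset.univ
      (fun i : Fin M => (i : ℕ) < M - 1) (fun i => d (s i))
  have hlastval : d (s last) =
      -∑ i ∈ Finset.univ.filter (fun i : Fin M => (i : ℕ) < M - 1), d (s i) :=
    hdlast last rfl
  have hsum0 : ∑ j, d j = 0 := by
    rw [← Equiv.sum_comp s d, ← hsplit, hfilter, Finset.sum_singleton, hlastval]
    ring
  refine ⟨hsum0, ?_⟩
  -- bound on the alternating sum (for the last coordinate)
  have key : |d (s last)| ≤ z (s last) := by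
    rcases Nat.lt_or_ge M 2 with hM1 | hM2
    · -- M = 1
      have hMe : M = 1 := by omega
      have hempty : Finset.univ.filter (fun i : Fin M => (i : ℕ) < M - 1) = ∅ := by
        ext i
        simp
        omega
      rw [hlastval, hempty]
      simp [le_of_lt (hpos _)]
    · -- M ≥ 2, M = 2^m with m ≥ 1, so M even, M - 1 = 2k+1
      have hm1 : 1 ≤ m := by
        by_contra h
        have hm0 : m = 0 := by omega
        subst hm0
        simp at hM
        omega
      have hMeven : M = 2 * 2 ^ (m - 1) := by
        rw [hM]
        rw [← pow_succ']
        congr 1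
        omega
      have hpow : 1 ≤ 2 ^ (m - 1) := Nat.one_le_two_pow
      obtain ⟨k, hk⟩ : ∃ k, M - 1 = 2 * k + 1 := ⟨2 ^ (m - 1) - 1, by omega⟩
      set f : ℕ → ℝ := fun n =>
        z (s ⟨min n (M - 1), lt_of_le_of_lt (min_le_right _ _) (Nat.sub_lt hMpos one_pos)⟩)
        with hf
      have mono : ∀ a b : ℕ, a ≤ b → f a ≤ f b := by
        intro a b hab
        apply hsort
        simp [Fin.le_def]
        omega
      set T : ℝ := ∑ j ∈ Finset.range (M - 1), (-1:ℝ)^j * f j with hT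
      have hST : ∑ i ∈ Finset.univ.filter (fun i : Fin M => (i : ℕ) < M - 1), d (s i)
          = -T := by
        have step1 : ∑ i ∈ Finset.univ.filter (fun i : Fin M => (i : ℕ) < M - 1), d (s i)
            = ∑ i : Fin M, (if (i : ℕ) < M - 1 then (-1:ℝ)^((i:ℕ)+1) * f (i:ℕ) else 0) := by
          rw [Finset.sum_filter]
          apply Finset.sum_congr rfl
          intro i _
          by_cases h : (i : ℕ) < M - 1
          · rw [if_pos h, if_pos h, hd i h]
            have hfe : f (i : ℕ) = z (s i) := by
              simp only [hf]
              congr 2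
              apply Fin.ext
              simp
              omega
            rw [hfe]
          · rw [if_neg h, if_neg h]
        rw [step1, Fin.sum_univ_eq_sum_range (fun n => if n < M - 1 then (-1:ℝ)^(n+1) * f n else 0)]
        rw [← Finset.sum_subset (Finset.range_subset_range.mpr (by omega : M - 1 ≤ M))
          (by intro x _ hx; simp at hx ⊢; intro h; omega)]
        rw [hT, ← Finset.sum_neg_distrib]
        apply Finset.sum_congr rfl
        intro x hx
        simp at hx
        rw [if_pos hx, pow_succ]
        ring
      have hbound := alt_bound f mono k
      rw [← hk] at hbound
      have hf0 : 0 < f 0 := hpos _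
      have hlow : f 0 ≤ T := hbound.1
      have hkval : 2 * k = M - 2 := by omega
      have hupper : T ≤ z (s last) := by
        refine le_trans hbound.2 ?_
        apply hsort
        simp only [Fin.le_def, hlast]
        omega
      rw [hlastval, hST, neg_neg]
      rw [abs_of_pos (lt_of_lt_of_le hf0 hlow)]
      exact hupper
  intro j
  set i : Fin M := s.symm j with hi
  have hji : s i = j := by simp [hi]
  rcases Nat.lt_or_ge (i : ℕ) (M - 1) with h | h
  · rw [← hji, hd i h, abs_mul, abs_pow, abs_neg, abs_one, one_pow, one_mul,
      abs_of_pos (hpos _)]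
  · have : i = last := by
      apply Fin.ext
      have := i.isLt
      simp [hlast]
      omega
    rw [← hji, this]
    exact key
end
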